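/- For all α, β ∈ 2^ℕ that are not E₀*-equivalent and every i ∈ ℕ, the points ψ(α) and ψ(β) are not joined by any path inside the finite union H₀ ∪ H₁ ∪ ... ∪ Hᵢ, i.e. ¬ JoinedIn (⋃_{k≤i} Hₖ) (ψ α) (ψ β). -/

import Mathlib

/-- The Cantor space `2^ℕ`. -/
abbrev Cantor : Type := ℕ → Fin 2

/-- Eventual equality `E₀` on `2^ℕ`. -/
def E0 (α β : Cantor) : Prop := ∃ m : ℕ, ∀ n ≥ m, α n = β n

/-- Pointwise complement of a binary sequence. -/
def cmpl (α : Cantor) : Cantor := fun n => 1 - α n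

/-- The relation `E₀*`: `α E₀* β` iff `α E₀ β` or `α E₀ β̄`. -/
def E0star (α β : Cantor) : Prop := E0 α β ∨ E0 α (cmpl β)

/-- The relation `Fₙ`: agreement from coordinate `n` onwards. -/
def Frel (n : ℕ) (α β : Cantor) : Prop := ∀ i ≥ n, α i = β i

/-- The pieces `Hₖ` of the Knaster continuum. -/
def Hset (k : ℕ) : Set (ℝ × ℝ) :=
  if k = 0 then
    {p | 0 ≤ p.2 ∧ ∃ c ∈ cantorSet, (p.1 - 1/2)^2 + p.2^2 = (c - 1/2)^2}
  else
    {p | p.2 ≤ 0 ∧ ∃ c ∈ cantorSet ∩ Set.Icc ((2:ℝ)/3^k) (3/3^k),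
      (p.1 - 5/(2*3^k))^2 + p.2^2 = (c - 5/(2*3^k))^2}

/-- The Knaster continuum (buckethandle). -/
def knasterH : Set (ℝ × ℝ) := ⋃ k : ℕ, Hset k

/-- The map `ψ : 2^ℕ → ℝ²` sending `α` to the corresponding Cantor set point on the x-axis. -/
noncomputable def psi (α : Cantor) : ℝ × ℝ := (∑' i : ℕ, 2 * (α i : ℝ) / 3^(i+1), 0)

open Set Real

/-!
A point of `Hₖ` lies on a semicircle whose two feet are mirror images in the Cantor set: about
`1/2` for `k = 0`, which complements every binary digit (read off the `0`–`2` ternary expansion),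
and about `5/(2·3ᵏ)` for `k ≥ 1`, which complements the digits from position `k` on. Both
mirrorings preserve the class `n ↦ β (N + n) + β N` of a digit sequence `β` once `k ≤ N`, so the
class of the digits of the right foot is well defined on `H₀ ∪ ⋯ ∪ H_N` and continuous on each
closed piece, hence on the union. Its values lie in the totally disconnected `2^ℕ`, so it is
constant along paths; at `ψ α` it is the class of `α` itself, and equal classes force `α E₀ β` or
`α E₀ β̄`.
-/

theorem Stream'.get_iterate {α : Type*} (f : α → α) (a : α) (n : ℕ) :
    (Stream'.iterate f a).get n = f^[n] a := by
  induction n with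
  | zero => rfl
  | succ n ih => rw [Stream'.get_succ_iterate', ih, Function.iterate_succ_apply']

lemma le_or_ge_of_mem_cantorSet {x : ℝ} (hx : x ∈ cantorSet) : x ≤ 1/3 ∨ 2/3 ≤ x := by
  rw [cantorSet_eq_union_halves] at hx
  rcases hx with ⟨y, hy, rfl⟩ | ⟨y, hy, rfl⟩ <;> have := cantorSet_subset_unitInterval hy
  · exact Or.inl (by linarith [this.2])
  · exact Or.inr (by linarith [this.1])

lemma div_three_mem_cantorSet {x : ℝ} (hx : x ∈ cantorSet) : x / 3 ∈ cantorSet := by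
  rw [cantorSet_eq_union_halves]
  exact Or.inl ⟨x, hx, rfl⟩

lemma two_add_div_three_mem_cantorSet {x : ℝ} (hx : x ∈ cantorSet) :
    (2 + x) / 3 ∈ cantorSet := by
  rw [cantorSet_eq_union_halves]
  exact Or.inr ⟨x, hx, rfl⟩

lemma one_sub_mem_preCantorSet {n : ℕ} {x : ℝ} (hx : x ∈ preCantorSet n) :
    1 - x ∈ preCantorSet n := by
  induction n generalizing x with
  | zero => exact ⟨by linarith [hx.2], by linarith [hx.1]⟩
  | succ n ih =>
    rcases hx with ⟨y, hy, rfl⟩ | ⟨y, hy, rfl⟩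
    · exact Or.inr ⟨1 - y, ih hy, by ring⟩
    · exact Or.inl ⟨1 - y, ih hy, by ring⟩

lemma one_sub_mem_cantorSet {x : ℝ} (hx : x ∈ cantorSet) : 1 - x ∈ cantorSet :=
  mem_iInter.2 fun n => one_sub_mem_preCantorSet (mem_iInter.1 hx n)

lemma two_add_div_pow_mem_cantorSet {k : ℕ} (hk : 1 ≤ k) {z : ℝ} (hz : z ∈ cantorSet) :
    (2 + z) / 3 ^ k ∈ cantorSet := by
  induction k, hk using Nat.le_induction with
  | base => simpa using two_add_div_three_mem_cantorSet hz
  | succ k _ ih => simpa [pow_succ, div_div] using div_three_mem_cantorSet ih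

lemma mapsTo_cantorStep : MapsTo cantorStep cantorSet cantorSet :=
  fun _ => cantorStep_mem_cantorSet

lemma cantorStep_of_le {x : ℝ} (h0 : 0 ≤ x) (h : x ≤ 1/3) : cantorStep x = 3 * x :=
  if_pos ⟨h0, h⟩

lemma cantorStep_of_gt {x : ℝ} (h : 1/3 < x) : cantorStep x = 3 * x - 2 :=
  if_neg fun hx => (not_le.2 h) hx.2

lemma cantorStep_one_sub {x : ℝ} (hx : x ∈ cantorSet) :
    cantorStep (1 - x) = 1 - cantorStep x := by
  have := cantorSet_subset_unitInterval hx
  rcases le_or_ge_of_mem_cantorSet hx with h | h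
  · rw [cantorStep_of_gt (by linarith), cantorStep_of_le this.1 h]; ring
  · rw [cantorStep_of_le (by linarith [this.2]) (by linarith), cantorStep_of_gt (by linarith)]
    ring

lemma cantorStep_iterate_one_sub {x : ℝ} (hx : x ∈ cantorSet) (n : ℕ) :
    cantorStep^[n] (1 - x) = 1 - cantorStep^[n] x := by
  induction n generalizing x with
  | zero => rfl
  | succ n ih =>
    rw [Function.iterate_succ_apply, Function.iterate_succ_apply, cantorStep_one_sub hx,
      ih (cantorStep_mem_cantorSet hx)]

lemma cantorStep_iterate_two_add_div_pow {k : ℕ} (hk : 1 ≤ k) {z : ℝ} (hz : z ∈ Icc 0 1) :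
    cantorStep^[k] ((2 + z) / 3 ^ k) = z := by
  induction k, hk using Nat.le_induction with
  | base => rw [Function.iterate_one, pow_one, cantorStep_of_gt (by linarith [hz.1])]; ring
  | succ k hk ih =>
    have h9 : (9 : ℝ) ≤ 3 ^ (k + 1) := by
      calc (9 : ℝ) = 3 ^ 2 := by norm_num
        _ ≤ 3 ^ (k + 1) := pow_le_pow_right₀ (by norm_num) (by omega)
    have hle : (2 + z) / 3 ^ (k + 1) ≤ 1/3 := by
      rw [div_le_iff₀ (by positivity)]; linarith [hz.2]
    have hnn : 0 ≤ (2 + z) / 3 ^ (k + 1) := by have := hz.1; positivity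
    have h3 : 3 * ((2 + z) / 3 ^ (k + 1)) = (2 + z) / 3 ^ k := by rw [pow_succ]; field_simp
    rw [Function.iterate_succ_apply, cantorStep_of_le hnn hle, h3, ih]

lemma cantorSet_inter_Icc_eq_image {k : ℕ} (hk : 1 ≤ k) :
    cantorSet ∩ Icc (2 / 3 ^ k) (3 / 3 ^ k) = (fun z => (2 + z) / 3 ^ k) '' cantorSet := by
  have h3k : (0 : ℝ) < 3 ^ k := by positivity
  ext c
  constructor
  · rintro ⟨hc, h2, h3⟩
    have hz : 3 ^ k * c - 2 ∈ Icc 0 1 := by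
      rw [div_le_iff₀ h3k] at h2
      rw [le_div_iff₀ h3k] at h3
      constructor <;> linarith
    have hc' : c = (2 + (3 ^ k * c - 2)) / 3 ^ k := by field_simp; ring
    refine ⟨3 ^ k * c - 2, ?_, hc'.symm⟩
    rw [← cantorStep_iterate_two_add_div_pow hk hz, ← hc']
    exact mapsTo_cantorStep.iterate k hc
  · rintro ⟨z, hz, rfl⟩
    have := cantorSet_subset_unitInterval hz
    exact ⟨two_add_div_pow_mem_cantorSet hk hz,
      div_le_div_of_nonneg_right (by linarith [this.1]) h3k.le,
      div_le_div_of_nonneg_right (by linarith [this.2]) h3k.le⟩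

noncomputable def cantorDigits (x : ℝ) : Cantor :=
  fun n => finTwoEquiv.symm ((cantorToBinary x).get n)

lemma continuousOn_cantorDigits : ContinuousOn cantorDigits cantorSet := by
  rw [continuousOn_iff_continuous_domRestrict]
  exact (continuous_pi fun n => continuous_of_discreteTopology.comp (continuous_apply n)).comp
    cantorSetHomeomorphNatToBool.continuous

lemma cantorDigits_ofDigits (b : ℕ → Bool) :
    cantorDigits (ofDigits fun i => cond (b i) (2 : Fin 3) 0) = finTwoEquiv.symm ∘ b :=
  congrArg (finTwoEquiv.symm ∘ ·) (cantorSetEquivNatToBool.apply_symm_apply b)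

lemma cantorDigits_apply (x : ℝ) (n : ℕ) :
    cantorDigits x n = if cantorStep^[n] x ∈ Icc 0 (1/3) then 0 else 1 := by
  simp only [cantorDigits, cantorToBinary, cantorSequence, Stream'.get_map, Stream'.get_iterate]
  split_ifs <;> rfl

lemma cantorDigits_add (x : ℝ) (k m : ℕ) :
    cantorDigits x (k + m) = cantorDigits (cantorStep^[k] x) m := by
  rw [cantorDigits_apply, cantorDigits_apply, add_comm, Function.iterate_add_apply]

lemma cantorDigits_one_sub {x : ℝ} (hx : x ∈ cantorSet) :
    cantorDigits (1 - x) = cmpl (cantorDigits x) := by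
  funext n
  have hy := mapsTo_cantorStep.iterate n hx
  have h01 := cantorSet_subset_unitInterval hy
  simp only [cmpl, cantorDigits_apply, cantorStep_iterate_one_sub hx]
  rcases le_or_ge_of_mem_cantorSet hy with h | h
  · rw [if_neg (fun h' => by linarith [h'.2]), if_pos ⟨h01.1, h⟩]; rfl
  · rw [if_pos ⟨by linarith [h01.2], by linarith⟩, if_neg (fun h' => by linarith [h'.2])]; rfl

lemma cantorDigits_two_add_div_pow {k : ℕ} (hk : 1 ≤ k) {z : ℝ} (hz : z ∈ Icc 0 1)
    (m : ℕ) :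
    cantorDigits ((2 + z) / 3 ^ k) (k + m) = cantorDigits z m := by
  rw [cantorDigits_add, cantorStep_iterate_two_add_div_pow hk hz]

lemma psi_fst_eq_ofDigits (α : Cantor) :
    (psi α).1 = ofDigits fun i => cond (finTwoEquiv (α i)) (2 : Fin 3) 0 := by
  refine tsum_congr fun i => ?_
  simp only [ofDigitsTerm]
  generalize α i = a
  fin_cases a <;> simp [finTwoEquiv]; ring

lemma psi_fst_mem_cantorSet (α : Cantor) : (psi α).1 ∈ cantorSet := by
  rw [psi_fst_eq_ofDigits]
  exact ofDigits_bool_to_fin_three_mem_cantorSet _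

lemma cantorDigits_psi_fst (α : Cantor) : cantorDigits (psi α).1 = α := by
  rw [psi_fst_eq_ofDigits, cantorDigits_ofDigits]
  funext i
  simp

def tailClass (N : ℕ) (β : Cantor) : Cantor := fun n => β (N + n) + β N

lemma tailClass_cmpl (N : ℕ) (β : Cantor) : tailClass N (cmpl β) = tailClass N β := by
  funext n
  simp only [tailClass, cmpl]
  generalize β (N + n) = a
  generalize β N = b
  revert a b
  decide

lemma tailClass_add (k N : ℕ) (β : Cantor) :
    tailClass (k + N) β = tailClass N fun m => β (k + m) := by
  funext n
  simp only [tailClass, add_assoc]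

lemma E0star_of_tailClass_eq {N : ℕ} {α β : Cantor} (h : tailClass N α = tailClass N β) :
    E0star α β := by
  have key : ∀ n ≥ N, α n + α N = β n + β N := fun n hn => by
    obtain ⟨m, rfl⟩ := Nat.exists_eq_add_of_le hn
    exact congrFun h m
  by_cases hN : α N = β N
  · exact Or.inl ⟨N, fun n hn => by simpa [hN] using key n hn⟩
  · refine Or.inr ⟨N, fun n hn => ?_⟩
    have := key n hn
    simp only [cmpl]
    generalize α n = a, β n = b, α N = c, β N = d at this hN
    revert a b c d
    decide

lemma half_add_abs_sub_half (x : ℝ) : 1/2 + |x - 1/2| = x ∨ 1/2 + |x - 1/2| = 1 - x := by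
  rcases le_total (1/2) x with h | h
  · exact Or.inl (by rw [abs_of_nonneg (by linarith)]; ring)
  · exact Or.inr (by rw [abs_of_nonpos (by linarith)]; ring)

lemma half_add_abs_sub_half_mem_cantorSet {x : ℝ} (hx : x ∈ cantorSet) :
    1/2 + |x - 1/2| ∈ cantorSet := by
  rcases half_add_abs_sub_half x with h | h <;> rw [h]
  exacts [hx, one_sub_mem_cantorSet hx]

lemma tailClass_cantorDigits_half_add_abs {x : ℝ} (hx : x ∈ cantorSet) (N : ℕ) :
    tailClass N (cantorDigits (1/2 + |x - 1/2|)) = tailClass N (cantorDigits x) := by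
  rcases half_add_abs_sub_half x with h | h <;> rw [h]
  rw [cantorDigits_one_sub hx, tailClass_cmpl]

lemma tailClass_cantorDigits_two_add_div_pow {k N : ℕ} (hk : 1 ≤ k) (hkN : k ≤ N) {z : ℝ}
    (hz : z ∈ Icc 0 1) :
    tailClass N (cantorDigits ((2 + z) / 3 ^ k)) = tailClass (N - k) (cantorDigits z) := by
  obtain ⟨M, rfl⟩ := Nat.exists_eq_add_of_le hkN
  rw [tailClass_add, Nat.add_sub_cancel_left]
  exact congrArg _ (funext (cantorDigits_two_add_div_pow hk hz))

def cantorCircles : Set (ℝ × ℝ) :=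
  {q | ∃ z ∈ cantorSet, (q.1 - 1/2) ^ 2 + q.2 ^ 2 = (z - 1/2) ^ 2}

noncomputable def circleRightEnd (q : ℝ × ℝ) : ℝ := 1/2 + √((q.1 - 1/2) ^ 2 + q.2 ^ 2)

noncomputable def circleInvariant (N : ℕ) (q : ℝ × ℝ) : Cantor :=
  tailClass N (cantorDigits (circleRightEnd q))

lemma isClosed_cantorCircles : IsClosed cantorCircles := by
  have : cantorCircles =
      (fun q : ℝ × ℝ => (q.1 - 1/2) ^ 2 + q.2 ^ 2) ⁻¹'
        ((fun z => (z - 1/2) ^ 2) '' cantorSet) := by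
    ext q
    exact exists_congr fun z => and_congr_right fun _ => eq_comm
  rw [this]
  exact (isCompact_cantorSet.image (by fun_prop)).isClosed.preimage (by fun_prop)

lemma fst_mem_Icc_of_mem_cantorCircles {q : ℝ × ℝ} (hq : q ∈ cantorCircles) :
    q.1 ∈ Icc 0 1 := by
  obtain ⟨z, hz, he⟩ := hq
  have := cantorSet_subset_unitInterval hz
  constructor <;> nlinarith [sq_nonneg q.2, this.1, this.2]

lemma fst_mem_cantorSet_of_mem_cantorCircles {q : ℝ × ℝ} (hq : q ∈ cantorCircles)
    (h2 : q.2 = 0) : q.1 ∈ cantorSet := by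
  obtain ⟨z, hz, he⟩ := hq
  rw [h2, zero_pow two_ne_zero, add_zero, sq_eq_sq_iff_eq_or_eq_neg] at he
  rcases he with h | h
  · rwa [show q.1 = z by linarith]
  · rw [show q.1 = 1 - z by linarith]; exact one_sub_mem_cantorSet hz

lemma circleRightEnd_eq {q : ℝ × ℝ} {z : ℝ} (h : (q.1 - 1/2) ^ 2 + q.2 ^ 2 = (z - 1/2) ^ 2) :
    circleRightEnd q = 1/2 + |z - 1/2| := by
  rw [circleRightEnd, h, sqrt_sq_eq_abs]

lemma continuous_circleRightEnd : Continuous circleRightEnd := by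
  unfold circleRightEnd; fun_prop

lemma continuousOn_circleInvariant (N : ℕ) : ContinuousOn (circleInvariant N) cantorCircles := by
  have hmaps : MapsTo circleRightEnd cantorCircles cantorSet := by
    rintro q ⟨z, hz, he⟩
    rw [circleRightEnd_eq he]
    exact half_add_abs_sub_half_mem_cantorSet hz
  have htail : Continuous (tailClass N) := by unfold tailClass; fun_prop
  exact htail.comp_continuousOn
    (continuousOn_cantorDigits.comp continuous_circleRightEnd.continuousOn hmaps)

lemma circleInvariant_axis {x : ℝ} (hx : x ∈ cantorSet) (N : ℕ) :
    circleInvariant N (x, 0) = tailClass N (cantorDigits x) := by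
  rw [circleInvariant, circleRightEnd_eq (z := x) (by simp),
    tailClass_cantorDigits_half_add_abs hx]

def zoom (k : ℕ) (p : ℝ × ℝ) : ℝ × ℝ := (3 ^ k * p.1 - 2, 3 ^ k * p.2)

lemma continuous_zoom (k : ℕ) : Continuous (zoom k) := by
  unfold zoom; fun_prop

lemma Hset_zero : Hset 0 = {p | 0 ≤ p.2} ∩ cantorCircles := by
  ext p
  simp [Hset, cantorCircles]

lemma Hset_of_one_le {k : ℕ} (hk : 1 ≤ k) :
    Hset k = {p | p.2 ≤ 0} ∩ zoom k ⁻¹' cantorCircles := by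
  have h3k : (3 : ℝ) ^ k ≠ 0 := by positivity
  ext p
  simp only [Hset, if_neg (show k ≠ 0 by omega), cantorSet_inter_Icc_eq_image hk,
    exists_mem_image, mem_inter_iff, mem_ofPred_eq, mem_preimage, cantorCircles, zoom]
  refine and_congr_right fun _ => exists_congr fun z => and_congr_right fun _ => ?_
  have e1 : (3 ^ k * p.1 - 2 - 1/2) ^ 2 + (3 ^ k * p.2) ^ 2 =
      (3 ^ k) ^ 2 * ((p.1 - 5 / (2 * 3 ^ k)) ^ 2 + p.2 ^ 2) := by field_simp; ring
  have e2 : (z - 1/2) ^ 2 = (3 ^ k) ^ 2 * ((2 + z) / 3 ^ k - 5 / (2 * 3 ^ k)) ^ 2 := by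
    field_simp; ring
  rw [e1, e2, mul_right_inj' (pow_ne_zero 2 h3k)]

lemma isClosed_Hset (k : ℕ) : IsClosed (Hset k) := by
  rcases Nat.eq_zero_or_pos k with rfl | hk
  · rw [Hset_zero]
    exact (isClosed_le continuous_const continuous_snd).inter isClosed_cantorCircles
  · rw [Hset_of_one_le hk]
    exact (isClosed_le continuous_snd continuous_const).inter
      (isClosed_cantorCircles.preimage (continuous_zoom k))

noncomputable def knasterLevel (x : ℝ) : ℕ := Nat.log 3 ⌊3 / x⌋₊

lemma knasterLevel_eq {k : ℕ} {x : ℝ} (h2 : 2 ≤ 3 ^ k * x) (h3 : 3 ^ k * x ≤ 3) :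
    knasterLevel x = k := by
  have hx : 0 < x := pos_of_mul_pos_right (by linarith) (by positivity : (0 : ℝ) ≤ 3 ^ k)
  apply Nat.log_eq_of_pow_le_of_lt_pow
  · exact Nat.le_floor (by push_cast; rw [le_div_iff₀ hx]; linarith)
  · refine (Nat.floor_lt (by positivity)).2 ?_
    push_cast
    rw [div_lt_iff₀ hx, pow_succ]
    linarith

/-- Below the axis, `knasterLevel p.1` is the `k` with `p ∈ Hₖ`, and `zoom k` carries `Hₖ` onto
the lower half of `cantorCircles`. -/
noncomputable def knasterInvariant (N : ℕ) (p : ℝ × ℝ) : Cantor :=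
  if 0 ≤ p.2 then circleInvariant N p
  else circleInvariant (N - knasterLevel p.1) (zoom (knasterLevel p.1) p)

lemma continuousOn_knasterInvariant_Hset_zero (N : ℕ) :
    ContinuousOn (knasterInvariant N) (Hset 0) := by
  rw [Hset_zero]
  exact (continuousOn_circleInvariant N).mono inter_subset_right |>.congr
    fun p hp => if_pos hp.1

lemma knasterInvariant_eq_of_mem_Hset {k N : ℕ} (hk : 1 ≤ k) (hkN : k ≤ N) {p : ℝ × ℝ}
    (hp : p ∈ Hset k) : knasterInvariant N p = circleInvariant (N - k) (zoom k p) := by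
  rw [Hset_of_one_le hk] at hp
  obtain ⟨hp2 : p.2 ≤ 0, hpC⟩ := hp
  rcases hp2.lt_or_eq with hneg | hzero
  · have hI := fst_mem_Icc_of_mem_cantorCircles hpC
    simp only [zoom] at hI
    rw [knasterInvariant, if_neg (not_le.2 hneg),
      knasterLevel_eq (by linarith [hI.1]) (by linarith [hI.2])]
  · set w := (zoom k p).1
    have hzp : zoom k p = (w, 0) := Prod.ext rfl (by simp [zoom, hzero])
    have hw : w ∈ cantorSet := fst_mem_cantorSet_of_mem_cantorCircles hpC (by simp [zoom, hzero])
    have hp : p = ((2 + w) / 3 ^ k, 0) := Prod.ext (by simp only [w, zoom]; field_simp; ring) hzero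
    rw [knasterInvariant, if_pos hzero.ge, hzp, circleInvariant_axis hw, hp,
      circleInvariant_axis (two_add_div_pow_mem_cantorSet hk hw),
      tailClass_cantorDigits_two_add_div_pow hk hkN (cantorSet_subset_unitInterval hw)]

lemma continuousOn_knasterInvariant_Hset {k N : ℕ} (hk : 1 ≤ k) (hkN : k ≤ N) :
    ContinuousOn (knasterInvariant N) (Hset k) := by
  have hmaps : MapsTo (zoom k) (Hset k) cantorCircles := by
    rw [Hset_of_one_le hk]; exact fun p hp => hp.2
  exact ((continuousOn_circleInvariant (N - k)).comp (continuous_zoom k).continuousOn hmaps).congr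
    fun p hp => knasterInvariant_eq_of_mem_Hset hk hkN hp

lemma continuousOn_knasterInvariant (N : ℕ) :
    ContinuousOn (knasterInvariant N) (⋃ k ≤ N, Hset k) := by
  change ContinuousOn _ (⋃ k ∈ Iic N, Hset k)
  rw [biUnion_eq_iUnion]
  refine (locallyFinite_of_finite _).continuousOn_iUnion (fun k => isClosed_Hset k)
    fun ⟨k, hk⟩ => ?_
  rcases Nat.eq_zero_or_pos k with rfl | hk0
  · exact continuousOn_knasterInvariant_Hset_zero N
  · exact continuousOn_knasterInvariant_Hset hk0 hk

lemma knasterInvariant_psi (N : ℕ) (α : Cantor) :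
    knasterInvariant N (psi α) = tailClass N α := by
  rw [knasterInvariant, if_pos (show (0 : ℝ) ≤ (psi α).2 from le_rfl),
    show psi α = ((psi α).1, 0) from rfl, circleInvariant_axis (psi_fst_mem_cantorSet α),
    cantorDigits_psi_fst]

lemma JoinedIn.apply_eq_of_continuousOn {X Y : Type*} [TopologicalSpace X] [TopologicalSpace Y]
    [TotallyDisconnectedSpace Y] {F : Set X} {x y : X} (h : JoinedIn F x y) {f : X → Y}
    (hf : ContinuousOn f F) : f x = f y := by
  have : f y ∈ connectedComponent (f x) :=
    pathComponent_subset_component _ (h.map_continuousOn hf).joined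
  rw [connectedComponent_eq_singleton] at this
  exact this.symm

/-- If `α` and `β` are not `E₀*`-equivalent, then for every `i`, the points
`ψ α` and `ψ β` are not joined by any path inside `H₀ ∪ ⋯ ∪ Hᵢ`. -/
theorem psi_not_joinedIn_finite_union :
    ∀ α β : Cantor, ¬ E0star α β →
      ∀ i : ℕ, ¬ JoinedIn (⋃ k ≤ i, Hset k) (psi α) (psi β) := by
  intro α β hαβ i hJ
  have := hJ.apply_eq_of_continuousOn (continuousOn_knasterInvariant i)
  rw [knasterInvariant_psi, knasterInvariant_psi] at this
  exact hαβ (E0star_of_tailClass_eq this)
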